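/- If Γ consists of formulas closed under conjunction with members of Δ modulo T-equivalence (A ∈ Γ, C ∈ Δ implies A ∧ C is T-equivalent to a member of Γ), then Γ-preservativity satisfies the Montagna rule: A ⊳_{T,Γ} B implies (C → A) ⊳_{T,Γ} (C → B) for every C ∈ Δ. -/
import Mathlib


inductive Fm : Type
  | bot : Fm
  | atom : ℕ → Fm
  | and : Fm → Fm → Fm
  | or : Fm → Fm → Fm
  | imp : Fm → Fm → Fm
deriving DecidableEq

namespace Fm

def neg (A : Fm) : Fm := A.imp .bot
def top : Fm := Fm.bot.imp .bot
def iff (A B : Fm) : Fm := (A.imp B).and (B.imp A)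

def subst (θ : ℕ → Fm) : Fm → Fm
  | bot => bot
  | atom n => θ n
  | and A B => (A.subst θ).and (B.subst θ)
  | or A B => (A.subst θ).or (B.subst θ)
  | imp A B => (A.subst θ).imp (B.subst θ)

def atoms : Fm → Finset ℕ
  | bot => ∅
  | atom n => {n}
  | and A B => A.atoms ∪ B.atoms
  | or A B => A.atoms ∪ B.atoms
  | imp A B => A.atoms ∪ B.atoms

/-- maximal nesting of implications in the left/overall: `c→`. -/
def cimp : Fm → ℕ
  | bot => 0
  | atom _ => 0
  | and A B => max A.cimp B.cimp
  | or A B => max A.cimp B.cimp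
  | imp A B => 1 + max A.cimp B.cimp

end Fm

def bigAndL (l : List Fm) : Fm := l.foldr Fm.and Fm.top
def bigOrL (l : List Fm) : Fm := l.foldr Fm.or Fm.bot

/-- nonempty disjunction -/
def bigOrNE : Fm → List Fm → Fm
  | A, [] => A
  | A, B :: l => A.or (bigOrNE B l)

/-- Hilbert-style intuitionistic propositional calculus. -/
inductive IPC : Fm → Prop
  | imp_k (A B : Fm) : IPC (A.imp (B.imp A))
  | imp_s (A B C : Fm) : IPC ((A.imp (B.imp C)).imp ((A.imp B).imp (A.imp C)))
  | and_intro (A B : Fm) : IPC (A.imp (B.imp (A.and B)))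
  | and_left (A B : Fm) : IPC ((A.and B).imp A)
  | and_right (A B : Fm) : IPC ((A.and B).imp B)
  | or_inl (A B : Fm) : IPC (A.imp (A.or B))
  | or_inr (A B : Fm) : IPC (B.imp (A.or B))
  | or_elim (A B C : Fm) : IPC ((A.imp C).imp ((B.imp C).imp ((A.or B).imp C)))
  | exfalso (A : Fm) : IPC (Fm.bot.imp A)
  | mp {A B : Fm} : IPC (A.imp B) → IPC A → IPC B

/-- Γ-preservativity in the logic T : `A ⊳_{T,Γ} B`. -/
def Pres (T : Fm → Prop) (Γ : Set Fm) (A B : Fm) : Prop :=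
  ∀ E ∈ Γ, T (E.imp A) → T (E.imp B)

/-- substitutions are identity on the parameters. -/
def IdOnPar (par : Finset ℕ) (θ : ℕ → Fm) : Prop :=
  ∀ p ∈ par, θ p = Fm.atom p

/-- implication-free formulas. -/
inductive NI : Fm → Prop
  | bot : NI .bot
  | atom (n : ℕ) : NI (.atom n)
  | and {A B : Fm} : NI A → NI B → NI (A.and B)
  | or {A B : Fm} : NI A → NI B → NI (A.or B)

/-- No Nested Implications in the Left. -/
inductive NNIL : Fm → Prop
  | bot : NNIL .bot
  | atom (n : ℕ) : NNIL (.atom n)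
  | and {A B : Fm} : NNIL A → NNIL B → NNIL (A.and B)
  | or {A B : Fm} : NNIL A → NNIL B → NNIL (A.or B)
  | imp {A B : Fm} : NI A → NNIL B → NNIL (A.imp B)

def IPCPrime (A : Fm) : Prop :=
  ∀ B C, IPC (A.imp (B.or C)) → IPC (A.imp B) ∨ IPC (A.imp C)

/-- T-components: `⋀Γ ∧ ⋀Δ`, Γ atoms, Δ implications with atomic
antecedents not T-provable from Γ. -/
def IsComponentOver (T : Fm → Prop) (B : Fm) : Prop :=
  ∃ (as : List ℕ) (imps : List (ℕ × Fm)),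
    B = (bigAndL (as.map Fm.atom)).and
          (bigAndL (imps.map fun p => (Fm.atom p.1).imp p.2)) ∧
    ∀ p ∈ imps, ¬ T ((bigAndL (as.map Fm.atom)).imp (Fm.atom p.1))


theorem Ttrans (T : Fm → Prop) (hext : ∀ A, IPC A → T A)
    (hmp : ∀ A B, T (A.imp B) → T A → T B) {X Y Z : Fm}
    (h1 : T (X.imp Y)) (h2 : T (Y.imp Z)) : T (X.imp Z) :=
  hmp _ _ (hmp _ _ (hext _ (IPC.imp_s X Y Z))
    (hmp _ _ (hext _ (IPC.imp_k (Y.imp Z) X)) h2)) h1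

theorem stmt_19 (T : Fm → Prop) (hext : ∀ A, IPC A → T A)
    (hmp : ∀ A B, T (A.imp B) → T A → T B) (Γ Δ : Set Fm)
    (hclose : ∀ A ∈ Γ, ∀ C ∈ Δ, ∃ A' ∈ Γ, T ((A.and C).iff A'))
    (A B : Fm) (h : Pres T Γ A B) (C : Fm) (hC : C ∈ Δ) :
    Pres T Γ (C.imp A) (C.imp B) := by
  intro E hE hEA
  obtain ⟨A', hA', hiff⟩ := hclose E hE C hC
  have h1 : T ((E.and C).imp A') := hmp _ _ (hext _ (IPC.and_left _ _)) hiff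
  have h2 : T (A'.imp (E.and C)) := hmp _ _ (hext _ (IPC.and_right _ _)) hiff
  have hA'E : T (A'.imp E) := Ttrans T hext hmp h2 (hext _ (IPC.and_left E C))
  have hA'C : T (A'.imp C) := Ttrans T hext hmp h2 (hext _ (IPC.and_right E C))
  have hA'CA : T (A'.imp (C.imp A)) := Ttrans T hext hmp hA'E hEA
  have hA'A : T (A'.imp A) := hmp _ _ (hmp _ _ (hext _ (IPC.imp_s A' C A)) hA'CA) hA'C
  have hA'B : T (A'.imp B) := h A' hA' hA'A
  have hECB : T ((E.and C).imp B) := Ttrans T hext hmp h1 hA'B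
  have h3 : T (E.imp (C.imp (E.and C))) := hext _ (IPC.and_intro E C)
  have h4 : T ((C.imp (E.and C)).imp (C.imp B)) :=
    hmp _ _ (hext _ (IPC.imp_s C (E.and C) B))
      (hmp _ _ (hext _ (IPC.imp_k ((E.and C).imp B) C)) hECB)
  exact Ttrans T hext hmp h3 h4
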